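/- Consider on ℝ⁴ (coordinates x = (x₁, x₂, x₃, x₄) = (f₁, f₂, g₁, g₂)) the Poisson bracket {F,G} := (∂F/∂x₃ ∂G/∂x₁ − ∂F/∂x₁ ∂G/∂x₃) + x₄²(∂F/∂x₄ ∂G/∂x₂ − ∂F/∂x₂ ∂G/∂x₄) + x₄(∂F/∂x₃ ∂G/∂x₂ − ∂F/∂x₂ ∂G/∂x₃), i.e. the bracket of the bivector field Π = ∂/∂g₁ ∧ ∂/∂f₁ + g₂² ∂/∂g₂ ∧ ∂/∂f₂ + g₂ ∂/∂g₁ ∧ ∂/∂f₂. Then there do NOT exist: an open neighborhood U of 0 in ℝ⁴; smooth functions p₁, q₁, z₁, z₂: U → ℝ vanishing at 0 such that the map (p₁, q₁, z₁, z₂) is a diffeomorphism from U onto an open subset of ℝ⁴; smooth functions P, Z: ℝ² → ℝ with p₁(x) = P(x₁, x₂) and z₁(x) = Z(x₁, x₂) for all x ∈ U; and a smooth function φ defined on a neighborhood of (0,0) in ℝ², such that on U the relations {q₁,p₁} = 1, {q₁,z₁} = 0, {q₁,z₂} = 0, {p₁,z₁} = 0, {p₁,z₂} = 0 and {z₁,z₂}(x)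 = φ(z₁(x), z₂(x)) hold (i.e. such that Π takes the form ∂/∂q₁ ∧ ∂/∂p₁ + φ(z₁,z₂) ∂/∂z₁ ∧ ∂/∂z₂ in these coordinates). -/

import Mathlib

/-- Partial derivative of `f : ℝ⁴ → ℝ` in the `i`-th coordinate direction. -/
noncomputable def pd4 (i : Fin 4) (f : (Fin 4 → ℝ) → ℝ) (x : Fin 4 → ℝ) : ℝ :=
  fderiv ℝ f x (Pi.single i 1)

/-- The Poisson bracket on `ℝ⁴` (coordinates `(f₁, f₂, g₁, g₂) = (x 0, x 1, x 2, x 3)`) of the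
bivector field `Π = ∂/∂g₁ ∧ ∂/∂f₁ + g₂² ∂/∂g₂ ∧ ∂/∂f₂ + g₂ ∂/∂g₁ ∧ ∂/∂f₂`. -/
noncomputable def brkc (F G : (Fin 4 → ℝ) → ℝ) (x : Fin 4 → ℝ) : ℝ :=
    (pd4 2 F x * pd4 0 G x - pd4 0 F x * pd4 2 G x)
  + (x 3) ^ 2 * (pd4 3 F x * pd4 1 G x - pd4 1 F x * pd4 3 G x)
  + (x 3) * (pd4 2 F x * pd4 1 G x - pd4 1 F x * pd4 2 G x)

open Filter Topology

noncomputable def proj01 : (Fin 4 → ℝ) →L[ℝ] ℝ × ℝ :=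
  (ContinuousLinearMap.proj 0).prod (ContinuousLinearMap.proj 1)

lemma pd4_comp {U : Set (Fin 4 → ℝ)} (hU : IsOpen U) {F : ℝ × ℝ → ℝ}
    (hF : ContDiff ℝ (⊤ : ℕ∞) F) {f : (Fin 4 → ℝ) → ℝ}
    (hf : ∀ y ∈ U, f y = F (y 0, y 1)) {x} (hx : x ∈ U) (i : Fin 4) :
    pd4 i f x = fderiv ℝ F (x 0, x 1)
      ((Pi.single i (1:ℝ) : Fin 4 → ℝ) 0, (Pi.single i (1:ℝ) : Fin 4 → ℝ) 1) := by
  have hev : f =ᶠ[𝓝 x] (F ∘ proj01) := by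
    filter_upwards [hU.mem_nhds hx] with y hy
    exact hf y hy
  have h2 : fderiv ℝ (F ∘ proj01) x = (fderiv ℝ F (proj01 x)).comp proj01 := by
    rw [fderiv_comp x ((hF.differentiable (by simp)).differentiableAt) proj01.differentiableAt,
      proj01.fderiv]
  rw [pd4, hev.fderiv_eq, h2]
  rfl

lemma brkc_right {U : Set (Fin 4 → ℝ)} (hU : IsOpen U) {F : ℝ × ℝ → ℝ}
    (hF : ContDiff ℝ (⊤ : ℕ∞) F) {f : (Fin 4 → ℝ) → ℝ}
    (hf : ∀ y ∈ U, f y = F (y 0, y 1)) (G : (Fin 4 → ℝ) → ℝ) {x} (hx : x ∈ U) :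
    brkc G f x = pd4 2 G x * fderiv ℝ F (x 0, x 1) (1, 0)
      + (x 3) ^ 2 * (pd4 3 G x * fderiv ℝ F (x 0, x 1) (0, 1))
      + (x 3) * (pd4 2 G x * fderiv ℝ F (x 0, x 1) (0, 1)) := by
  have h0 := pd4_comp hU hF hf hx 0
  have h1 := pd4_comp hU hF hf hx 1
  have h2 := pd4_comp hU hF hf hx 2
  have h3 := pd4_comp hU hF hf hx 3
  simp only [Pi.single_eq_same, Pi.single_eq_of_ne (by decide : (0:Fin 4) ≠ 1),
    Pi.single_eq_of_ne (by decide : (1:Fin 4) ≠ 0),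
    Pi.single_eq_of_ne (by decide : (0:Fin 4) ≠ 2), Pi.single_eq_of_ne (by decide : (1:Fin 4) ≠ 2),
    Pi.single_eq_of_ne (by decide : (0:Fin 4) ≠ 3), Pi.single_eq_of_ne (by decide : (1:Fin 4) ≠ 3)] at h0 h1 h2 h3
  have hz : fderiv ℝ F (x 0, x 1) ((0:ℝ), (0:ℝ)) = 0 := by
    have : ((0:ℝ), (0:ℝ)) = (0 : ℝ × ℝ) := rfl
    rw [this, map_zero]
  rw [brkc, h0, h1, h2, h3, hz]
  ring

/-- There is no system of local coordinates `(p₁, q₁, z₁, z₂)` centered at `0`, with `p₁` and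
`z₁` depending only on `f₁` and `f₂`, in which the Poisson structure
`Π = ∂/∂g₁ ∧ ∂/∂f₁ + g₂² ∂/∂g₂ ∧ ∂/∂f₂ + g₂ ∂/∂g₁ ∧ ∂/∂f₂` takes the split canonical form
`∂/∂q₁ ∧ ∂/∂p₁ + φ(z₁,z₂) ∂/∂z₁ ∧ ∂/∂z₂`. -/
theorem no_split_coordinates :
    ¬ ∃ (U : Set (Fin 4 → ℝ)) (p1 q1 z1 z2 : (Fin 4 → ℝ) → ℝ)
        (P Z : ℝ × ℝ → ℝ) (W : Set (ℝ × ℝ)) (φ : ℝ × ℝ → ℝ),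
      IsOpen U ∧ (0 : Fin 4 → ℝ) ∈ U ∧
      ContDiffOn ℝ (⊤ : ℕ∞) p1 U ∧ ContDiffOn ℝ (⊤ : ℕ∞) q1 U ∧
      ContDiffOn ℝ (⊤ : ℕ∞) z1 U ∧ ContDiffOn ℝ (⊤ : ℕ∞) z2 U ∧
      p1 0 = 0 ∧ q1 0 = 0 ∧ z1 0 = 0 ∧ z2 0 = 0 ∧
      -- `(p₁, q₁, z₁, z₂)` is a diffeomorphism from `U` onto an open subset of `ℝ⁴`
      (let Φ : (Fin 4 → ℝ) → ℝ × ℝ × ℝ × ℝ := fun x => (p1 x, q1 x, z1 x, z2 x)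
       IsOpen (Φ '' U) ∧ Set.InjOn Φ U ∧
       ∃ Ψ : ℝ × ℝ × ℝ × ℝ → (Fin 4 → ℝ),
         ContDiffOn ℝ (⊤ : ℕ∞) Ψ (Φ '' U) ∧ ∀ x ∈ U, Ψ (Φ x) = x) ∧
      -- `p₁` and `z₁` depend only on `f₁ = x 0` and `f₂ = x 1`
      ContDiff ℝ (⊤ : ℕ∞) P ∧ ContDiff ℝ (⊤ : ℕ∞) Z ∧
      (∀ x ∈ U, p1 x = P (x 0, x 1)) ∧ (∀ x ∈ U, z1 x = Z (x 0, x 1)) ∧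
      -- `φ` is smooth on a neighborhood `W` of `(0,0)`
      IsOpen W ∧ ((0, 0) : ℝ × ℝ) ∈ W ∧ ContDiffOn ℝ (⊤ : ℕ∞) φ W ∧
      -- the Poisson structure takes the form `∂/∂q₁ ∧ ∂/∂p₁ + φ(z₁,z₂) ∂/∂z₁ ∧ ∂/∂z₂`
      (∀ x ∈ U, brkc q1 p1 x = 1) ∧
      (∀ x ∈ U, brkc q1 z1 x = 0) ∧ (∀ x ∈ U, brkc q1 z2 x = 0) ∧
      (∀ x ∈ U, brkc p1 z1 x = 0) ∧ (∀ x ∈ U, brkc p1 z2 x = 0) ∧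
      (∀ x ∈ U, brkc z1 z2 x = φ (z1 x, z2 x)) := by
  rintro ⟨U, p1, q1, z1, z2, P, Z, W, φ, hU, h0U, hp1s, hq1s, hz1s, hz2s, hp10, hq10, hz10,
    hz20, ⟨hopen, hinj, Ψ, hΨs, hinv⟩, hP, hZ, hpP, hzZ, hWopen, hW0, hφs,
    e1, e2, e3, e4, e5, e6⟩
  set Φ : (Fin 4 → ℝ) → ℝ × ℝ × ℝ × ℝ := fun x => (p1 x, q1 x, z1 x, z2 x) with hΦdef
  -- constants
  set A : ℝ := fderiv ℝ P ((0:ℝ), (0:ℝ)) (1, 0) with hAdef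
  set C : ℝ := fderiv ℝ Z ((0:ℝ), (0:ℝ)) (1, 0) with hCdef
  set D : ℝ := fderiv ℝ Z ((0:ℝ), (0:ℝ)) (0, 1) with hDdef
  have h03 : (0 : Fin 4 → ℝ) 3 = 0 := rfl
  have h00 : ((0 : Fin 4 → ℝ) 0, (0 : Fin 4 → ℝ) 1) = ((0:ℝ), (0:ℝ)) := rfl
  -- equation at 0 for p1
  have hA : pd4 2 q1 0 * A = 1 := by
    have := e1 0 h0U
    rw [brkc_right hU hP hpP q1 h0U] at this
    rw [h03, h00] at this
    linarith [this]
  have hq2ne : pd4 2 q1 0 ≠ 0 := left_ne_zero_of_mul_eq_one hA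
  -- equation at 0 for z1 : C = 0
  have hC : C = 0 := by
    have := e2 0 h0U
    rw [brkc_right hU hZ hzZ q1 h0U] at this
    rw [h03, h00] at this
    have h' : pd4 2 q1 0 * C = 0 := by linarith [this]
    exact (mul_eq_zero.mp h').resolve_left hq2ne
  -- differentiability at 0
  have hp1d : DifferentiableAt ℝ p1 0 :=
    ((hp1s.contDiffAt (hU.mem_nhds h0U)).differentiableAt (by simp))
  have hq1d : DifferentiableAt ℝ q1 0 :=
    ((hq1s.contDiffAt (hU.mem_nhds h0U)).differentiableAt (by simp))
  have hz1d : DifferentiableAt ℝ z1 0 :=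
    ((hz1s.contDiffAt (hU.mem_nhds h0U)).differentiableAt (by simp))
  have hz2d : DifferentiableAt ℝ z2 0 :=
    ((hz2s.contDiffAt (hU.mem_nhds h0U)).differentiableAt (by simp))
  -- D ≠ 0 from the diffeomorphism condition
  have hD : D ≠ 0 := by
    intro hD0
    -- fderiv of z1 at 0 vanishes
    have hz1f : fderiv ℝ z1 0 = 0 := by
      have hev : z1 =ᶠ[𝓝 0] (Z ∘ proj01) := by
        filter_upwards [hU.mem_nhds h0U] with y hy
        exact hzZ y hy
      have h2 : fderiv ℝ (Z ∘ proj01) 0 = (fderiv ℝ Z (proj01 0)).comp proj01 := by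
        rw [fderiv_comp 0 ((hZ.differentiable (by simp)).differentiableAt) proj01.differentiableAt,
          proj01.fderiv]
      rw [hev.fderiv_eq, h2]
      ext v
      have hpair : proj01 v = ((v 0 : ℝ) • ((1:ℝ), (0:ℝ)) + (v 1 : ℝ) • ((0:ℝ), (1:ℝ))) := by
        simp [proj01, Prod.ext_iff]
      have hpt : proj01 (0 : Fin 4 → ℝ) = ((0:ℝ), (0:ℝ)) := rfl
      simp only [ContinuousLinearMap.comp_apply, hpt, hpair, map_add, map_smul,
        smul_eq_mul, ContinuousLinearMap.zero_apply]
      rw [← hCdef, ← hDdef, hC, hD0]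
      ring
    have hΦ0mem : Φ 0 ∈ Φ '' U := ⟨0, h0U, rfl⟩
    have hΨd : DifferentiableAt ℝ Ψ (Φ 0) :=
      ((hΨs.contDiffAt (hopen.mem_nhds hΦ0mem)).differentiableAt (by simp))
    have hΦd : DifferentiableAt ℝ Φ 0 := hp1d.prodMk (hq1d.prodMk (hz1d.prodMk hz2d))
    have hΨ0 : Ψ (Φ 0) = 0 := hinv 0 h0U
    have hcompev : (Φ ∘ Ψ) =ᶠ[𝓝 (Φ 0)] id := by
      filter_upwards [hopen.mem_nhds hΦ0mem] with y hy
      obtain ⟨x, hxU, rfl⟩ := hy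
      simp [Function.comp, hinv x hxU]
    have hchain : (fderiv ℝ Φ 0).comp (fderiv ℝ Ψ (Φ 0)) = ContinuousLinearMap.id ℝ _ := by
      have h1 : fderiv ℝ (Φ ∘ Ψ) (Φ 0) = ContinuousLinearMap.id ℝ _ := by
        rw [hcompev.fderiv_eq]; exact fderiv_id
      rw [fderiv_comp (Φ 0) (by rw [hΨ0]; exact hΦd) hΨd, hΨ0] at h1
      exact h1
    -- apply to w = (0,0,1,0)
    set w : ℝ × ℝ × ℝ × ℝ := (0, 0, 1, 0) with hwdef
    have happ : fderiv ℝ Φ 0 (fderiv ℝ Ψ (Φ 0) w) = w := by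
      rw [← ContinuousLinearMap.comp_apply, hchain]; rfl
    have hfΦ : fderiv ℝ Φ 0 = (fderiv ℝ p1 0).prod
        ((fderiv ℝ q1 0).prod ((fderiv ℝ z1 0).prod (fderiv ℝ z2 0))) :=
      (hp1d.hasFDerivAt.prodMk (hq1d.hasFDerivAt.prodMk
        (hz1d.hasFDerivAt.prodMk hz2d.hasFDerivAt))).fderiv
    have h3rd : (fderiv ℝ Φ 0 (fderiv ℝ Ψ (Φ 0) w)).2.2.1
        = fderiv ℝ z1 0 (fderiv ℝ Ψ (Φ 0) w) := by
      rw [hfΦ]; rfl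
    rw [happ, hz1f] at h3rd
    simp [hwdef] at h3rd
  -- the curve x_t = (0,0,0,t)
  set ρ : ℝ → (Fin 4 → ℝ) := fun t => Pi.single 3 t with hρdef
  have hρcont : Continuous ρ := by
    apply continuous_pi
    intro i
    by_cases h : i = 3
    · subst h; simpa [hρdef] using continuous_id'
    · have : (fun t => ρ t i) = fun _ => 0 := by
        funext t; simp [hρdef, Pi.single_eq_of_ne h]
      rw [this]; exact continuous_const
  have hρ0 : ρ 0 = 0 := by funext i; simp [hρdef]
  have hρ3 : ∀ t, ρ t 3 = t := fun t => Pi.single_eq_same ..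
  have hρ01 : ∀ t, ((ρ t) 0, (ρ t) 1) = ((0:ℝ), (0:ℝ)) := by
    intro t
    simp [hρdef, Pi.single_eq_of_ne (by decide : (0:Fin 4) ≠ 3),
      Pi.single_eq_of_ne (by decide : (1:Fin 4) ≠ 3)]
  have hmemU : ∀ᶠ t in 𝓝 (0:ℝ), ρ t ∈ U :=
    (hU.preimage hρcont).mem_nhds (by rw [Set.mem_preimage, hρ0]; exact h0U)
  -- key identity for t ≠ 0
  have hkey : ∀ t : ℝ, t ≠ 0 → ρ t ∈ U → t * pd4 3 q1 (ρ t) * A = -1 := by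
    intro t ht htU
    have E1 := e1 (ρ t) htU
    rw [brkc_right hU hP hpP q1 htU, hρ01 t, hρ3 t] at E1
    have E2 := e2 (ρ t) htU
    rw [brkc_right hU hZ hzZ q1 htU, hρ01 t, hρ3 t] at E2
    rw [← hAdef] at E1
    rw [← hCdef, ← hDdef, hC] at E2
    -- E2 : pd2 * 0 + t^2 * (pd3 * D) + t * (pd2 * D) = 0
    have hfac : t * D * (pd4 2 q1 (ρ t) + t * pd4 3 q1 (ρ t)) = 0 := by
      linear_combination E2
    have hc : pd4 2 q1 (ρ t) + t * pd4 3 q1 (ρ t) = 0 :=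
      (mul_eq_zero.mp hfac).resolve_left (mul_ne_zero ht hD)
    linear_combination (A + t * fderiv ℝ P ((0:ℝ),(0:ℝ)) ((0:ℝ),(1:ℝ))) * hc - E1
  -- continuity of t ↦ pd4 3 q1 (ρ t) at 0
  have hfcont : ContinuousOn (fun x => fderiv ℝ q1 x) U :=
    hq1s.continuousOn_fderiv_of_isOpen hU (by simp)
  have hpdcont : ContinuousAt (fun t : ℝ => pd4 3 q1 (ρ t)) 0 := by
    have h1 : ContinuousAt (fun x => fderiv ℝ q1 x) 0 :=
      hfcont.continuousAt (hU.mem_nhds h0U)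
    have h2 : ContinuousAt (fun x => pd4 3 q1 x) 0 := by
      have := ((ContinuousLinearMap.apply ℝ ℝ
        ((Pi.single 3 1 : Fin 4 → ℝ))).continuous.continuousAt).comp h1
      exact this
    have h3 : ContinuousAt (fun x => pd4 3 q1 x) (ρ 0) := hρ0 ▸ h2
    exact ContinuousAt.comp h3 hρcont.continuousAt
  -- contradiction via limits
  have hγcont : ContinuousAt (fun t : ℝ => t * pd4 3 q1 (ρ t) * A) 0 :=
    (continuousAt_id.mul hpdcont).mul continuousAt_const
  have hlim1 : Tendsto (fun t : ℝ => t * pd4 3 q1 (ρ t) * A) (𝓝[≠] 0) (𝓝 0) := by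
    have h := hγcont.tendsto.mono_left (nhdsWithin_le_nhds (s := {(0:ℝ)}ᶜ))
    simpa using h
  have hlim2 : Tendsto (fun t : ℝ => t * pd4 3 q1 (ρ t) * A) (𝓝[≠] 0) (𝓝 (-1)) := by
    apply Tendsto.congr'
      (f₁ := fun _ : ℝ => (-1:ℝ)) _ tendsto_const_nhds
    filter_upwards [hmemU.filter_mono nhdsWithin_le_nhds, self_mem_nhdsWithin] with t htU htne
    exact (hkey t htne htU).symm
  exact absurd (tendsto_nhds_unique hlim1 hlim2) (by norm_num)
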